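/- The derivative of the function A(H) = 8π·(1/(4H²+1) + (4H²/(4H²+1)^{3/2})·artanh(1/√(4H²+1))) is strictly positive at H = 0.17 and strictly negative at H = 0.19. -/

import Mathlib

/-!
In the variable `s = √(4H² + 1) > 1` the area is
`A = 8π (1/s² + (s² - 1)/s³ · artanh(1/s))`, and since `d/ds artanh(1/s) = -1/(s² - 1)` one gets
`A'(H) = 32πH/s⁵ · ((3 - s²) artanh(1/s) - 3s)`. So the sign of `A'` is that of the bracket, and
it suffices to pin down `artanh(1/s) = ½ log((s + 1)/(s - 1))` numerically. For `H ≤ 0.17` the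
ratio `(s + 1)/(s - 1)` is at least `32`, for `H ≥ 0.19` at most `30` (the values at `s = 33/31` and
`s = 31/29`); both are compared with `log 32 = 5 log 2`, the second through `log x ≤ x - 1`.
-/

open Real Set

/-- The inverse hyperbolic tangent. -/
noncomputable def artanh (x : ℝ) : ℝ := (1 / 2) * Real.log ((1 + x) / (1 - x))

/-- Pedrosa's formula for the area of the rotational CMC sphere of mean
curvature `H` in `S² × ℝ`. -/
noncomputable def pedrosaArea (H : ℝ) : ℝ :=
  8 * Real.pi * (1 / (4 * H ^ 2 + 1) +
    (4 * H ^ 2 / (4 * H ^ 2 + 1) ^ ((3 : ℝ) / 2)) *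
      _root_.artanh (1 / Real.sqrt (4 * H ^ 2 + 1)))

theorem hasDerivAt_artanh {x : ℝ} (h₁ : x ≠ 1) (h₂ : x ≠ -1) :
    HasDerivAt _root_.artanh (1 / (1 - x ^ 2)) x := by
  have h₁' : 1 - x ≠ 0 := sub_ne_zero.mpr h₁.symm
  have h₂' : 1 + x ≠ 0 := fun h => h₂ (by linarith)
  have hsq : 1 - x ^ 2 ≠ 0 := by
    rw [show 1 - x ^ 2 = (1 - x) * (1 + x) by ring]; exact mul_ne_zero h₁' h₂'
  have hq : HasDerivAt (fun y => (1 + y) / (1 - y)) (2 / (1 - x) ^ 2) x :=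
    (((hasDerivAt_id' x).const_add 1).fun_div ((hasDerivAt_id' x).const_sub 1) h₁').congr_deriv
      (by ring)
  refine ((hq.log (div_ne_zero h₂' h₁')).const_mul (1 / 2)).congr_deriv ?_
  field_simp
  ring

theorem artanh_one_div {s : ℝ} (hs : s ≠ 0) :
    _root_.artanh (1 / s) = log ((s + 1) / (s - 1)) / 2 := by
  rw [_root_.artanh, one_add_div hs, one_sub_div hs, div_div_div_cancel_right₀ hs]
  ring_nf

theorem log_le_log_add_div_sub_one {x c : ℝ} (hx : 0 < x) (hc : 0 < c) :
    log x ≤ log c + x / c - 1 := by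
  have := log_le_sub_one_of_pos (div_pos hx hc)
  rw [log_div hx.ne' hc.ne'] at this
  linarith

theorem log_thirty_two : log 32 = 5 * log 2 := by
  rw [show (32 : ℝ) = 2 ^ 5 by norm_num, log_pow]
  norm_num

noncomputable def pedrosaProfile (s : ℝ) : ℝ :=
  8 * π * (1 / s ^ 2 + (s ^ 2 - 1) / s ^ 3 * _root_.artanh (1 / s))

noncomputable def pedrosaSlope (s : ℝ) : ℝ :=
  (3 - s ^ 2) * _root_.artanh (1 / s) - 3 * s

theorem pedrosaArea_eq_pedrosaProfile (H : ℝ) :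
    pedrosaArea H = pedrosaProfile √(4 * H ^ 2 + 1) := by
  have hu : 0 ≤ 4 * H ^ 2 + 1 := by positivity
  rw [pedrosaArea, pedrosaProfile, sq_sqrt hu, rpow_div_two_eq_sqrt _ hu,
    show ((3 : ℝ)) = ((3 : ℕ) : ℝ) by norm_num, rpow_natCast]
  ring

theorem hasDerivAt_pedrosaProfile {s : ℝ} (h₀ : s ≠ 0) (h₁ : s ≠ 1) (h₂ : s ≠ -1) :
    HasDerivAt pedrosaProfile (8 * π / s ^ 4 * pedrosaSlope s) s := by
  have h₁' : 1 / s ≠ 1 := by rwa [ne_eq, div_eq_one_iff_eq h₀, eq_comm]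
  have h₂' : 1 / s ≠ -1 := by
    rw [ne_eq, div_eq_iff h₀]; intro h; apply h₂; linarith
  have hsq : s ^ 2 - 1 ≠ 0 := by
    rw [show s ^ 2 - 1 = (s - 1) * (s + 1) by ring]
    exact mul_ne_zero (sub_ne_zero.mpr h₁) fun h => h₂ (by linarith)
  have hinv : HasDerivAt (fun t => 1 / t) (-1 / s ^ 2) s :=
    ((hasDerivAt_const s (1 : ℝ)).fun_div (hasDerivAt_id' s) h₀).congr_deriv (by ring)
  have hart : HasDerivAt (fun t => _root_.artanh (1 / t)) (-1 / (s ^ 2 - 1)) s := by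
    refine ((hasDerivAt_artanh h₁' h₂').comp s hinv).congr_deriv ?_
    field_simp
  have hfirst := (hasDerivAt_const s (1 : ℝ)).fun_div (hasDerivAt_pow 2 s) (pow_ne_zero 2 h₀)
  have hcoeff := ((hasDerivAt_pow 2 s).sub_const 1).fun_div (hasDerivAt_pow 3 s) (pow_ne_zero 3 h₀)
  refine ((hfirst.fun_add (hcoeff.fun_mul hart)).const_mul (8 * π)).congr_deriv ?_
  rw [pedrosaSlope]
  field_simp
  ring

theorem hasDerivAt_pedrosaArea {H : ℝ} (hH : H ≠ 0) :
    HasDerivAt pedrosaArea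
      (32 * π * H / √(4 * H ^ 2 + 1) ^ 5 * pedrosaSlope √(4 * H ^ 2 + 1)) H := by
  set s := √(4 * H ^ 2 + 1)
  have hu : 0 < 4 * H ^ 2 + 1 := by positivity
  have hs₀ : 0 < s := sqrt_pos.mpr hu
  have hs₁ : s ≠ 1 := by
    intro h
    have : s ^ 2 = 4 * H ^ 2 + 1 := sq_sqrt hu.le
    exact hH (by nlinarith)
  have hsqrt : HasDerivAt (fun x => √(4 * x ^ 2 + 1)) (4 * H / s) H :=
    ((((hasDerivAt_pow 2 H).const_mul 4).add_const 1).sqrt hu.ne').congr_deriv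
      (by field_simp; ring)
  have hcomp := (hasDerivAt_pedrosaProfile hs₀.ne' hs₁ (by linarith)).comp H hsqrt
  rw [show pedrosaArea = pedrosaProfile ∘ fun x => √(4 * x ^ 2 + 1) from
    funext pedrosaArea_eq_pedrosaProfile]
  refine hcomp.congr_deriv ?_
  field_simp
  ring

theorem sign_deriv_pedrosaArea {H : ℝ} (hH : 0 < H) :
    SignType.sign (deriv pedrosaArea H) = SignType.sign (pedrosaSlope √(4 * H ^ 2 + 1)) := by
  rw [(hasDerivAt_pedrosaArea hH.ne').deriv, sign_mul, sign_pos (by positivity), one_mul]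

theorem five_mul_log_two_le_two_mul_artanh_one_div {s : ℝ} (h₁ : 1 < s) (h : s ≤ 33 / 31) :
    5 * log 2 ≤ 2 * _root_.artanh (1 / s) := by
  have h32 : (32 : ℝ) ≤ (s + 1) / (s - 1) := by
    rw [le_div_iff₀ (by linarith)]; linarith
  rw [artanh_one_div (by positivity), mul_div_cancel₀ _ two_ne_zero,
    ← log_thirty_two]
  exact log_le_log (by norm_num) h32

theorem two_mul_artanh_one_div_le {s : ℝ} (h : 31 / 29 ≤ s) :
    2 * _root_.artanh (1 / s) ≤ 5 * log 2 - 1 / 16 := by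
  have hr : (s + 1) / (s - 1) ≤ 30 := by
    rw [div_le_iff₀ (by linarith)]; linarith
  have := log_le_log_add_div_sub_one (x := (s + 1) / (s - 1)) (c := 32)
    (div_pos (by linarith) (by linarith)) (by norm_num)
  rw [artanh_one_div (by positivity), mul_div_cancel₀ _ two_ne_zero,
    ← log_thirty_two]
  linarith

theorem deriv_pedrosaArea_pos {H : ℝ} (h₀ : 0 < H) (h : H ≤ 0.17) : 0 < deriv pedrosaArea H := by
  rw [← sign_eq_one_iff, sign_deriv_pedrosaArea h₀, sign_eq_one_iff]
  set s := √(4 * H ^ 2 + 1)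
  have hs : s ^ 2 = 4 * H ^ 2 + 1 := sq_sqrt (by positivity)
  have hs₀ : 0 ≤ s := sqrt_nonneg _
  have hs₁ : 1 < s := by nlinarith
  have hs₂ : s ^ 2 ≤ 1.1156 := by nlinarith
  have hs₃ : s ≤ 1.0563 := by nlinarith
  have hA : 1.7328 ≤ _root_.artanh (1 / s) := by
    linarith [five_mul_log_two_le_two_mul_artanh_one_div hs₁ (by linarith), log_two_gt_d9]
  rw [pedrosaSlope]
  nlinarith

theorem deriv_pedrosaArea_neg {H : ℝ} (h : 0.19 ≤ H) : deriv pedrosaArea H < 0 := by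
  rw [← sign_eq_neg_one_iff, sign_deriv_pedrosaArea (by linarith), sign_eq_neg_one_iff]
  set s := √(4 * H ^ 2 + 1)
  have hs : s ^ 2 = 4 * H ^ 2 + 1 := sq_sqrt (by positivity)
  have hs₀ : 0 ≤ s := sqrt_nonneg _
  have hs₁ : 1.0697 ≤ s := by nlinarith
  have hA : _root_.artanh (1 / s) ≤ 1.7017 := by
    linarith [two_mul_artanh_one_div_le (s := s) (by linarith), log_two_lt_d9]
  have hA₀ : 0 ≤ _root_.artanh (1 / s) := by
    rw [artanh_one_div (by positivity)]
    exact div_nonneg (log_nonneg (by rw [le_div_iff₀ (by linarith)]; linarith)) zero_le_two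
  rw [pedrosaSlope]
  rcases le_total (s ^ 2) 3 with hsmall | hlarge
  · nlinarith
  · nlinarith

/-- `A'(0.17) > 0` and `A'(0.19) < 0`. -/
theorem pedrosaArea_deriv_sign_at_endpoints :
    0 < deriv pedrosaArea 0.17 ∧ deriv pedrosaArea 0.19 < 0 :=
  ⟨deriv_pedrosaArea_pos (by norm_num) le_rfl, deriv_pedrosaArea_neg le_rfl⟩
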